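/- arXiv:2504.16382 — 4 statements merged into one kernel-verified Lean document; each statement's English description precedes it below -/
import Mathlib

section
/- Let P ⊆ ℝ^d be finite, τ > 0, ε ∈ (0,1). Define φ : P → G, mapping each point of P to its nearest point in the grid G of points whose coordinates are integer multiples of ετ/√d, and for each grid point z ∈ φ(P) fix a representative rep(z) ∈ φ^{-1}(z) ∩ P; set P' := {rep(z) : z ∈ φ(P)}. Then any τ-dominating set S for P' is a (1+2ε)τ-dominating set for P. -/
open scoped Classical in
/-- Any τ-dominating set for the grid-rounded representative set P' is a
(1+2ε)τ-dominating set for P. -/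
theorem stmt_3 {d : ℕ} (P : Finset (EuclideanSpace ℝ (Fin d))) (τ ε : ℝ)
    (hτ : 0 < τ) (hε : ε ∈ Set.Ioo (0:ℝ) 1)
    (φ rep : EuclideanSpace ℝ (Fin d) → EuclideanSpace ℝ (Fin d))
    (hgrid : ∀ x ∈ P, ∀ i : Fin d, ∃ a : ℤ, φ x i = a * (ε * τ / Real.sqrt d))
    (hφ : ∀ x ∈ P, dist x (φ x) ≤ ε * τ)
    (hrep : ∀ x ∈ P, rep (φ x) ∈ P ∧ φ (rep (φ x)) = φ x ∧ dist (φ x) (rep (φ x)) ≤ ε * τ)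
    (S : Set (EuclideanSpace ℝ (Fin d)))
    (hdom : ∀ p ∈ P.image (fun x => rep (φ x)), ∃ s ∈ S, dist p s ≤ τ) :
    ∀ x ∈ P, ∃ s ∈ S, dist x s ≤ (1 + 2 * ε) * τ := by
  intro x hx
  obtain ⟨s, hs, hds⟩ := hdom (rep (φ x)) (Finset.mem_image_of_mem _ hx)
  refine ⟨s, hs, ?_⟩
  calc dist x s ≤ dist x (φ x) + dist (φ x) (rep (φ x)) + dist (rep (φ x)) s :=
        dist_triangle4 _ _ _ _
    _ ≤ ε * τ + ε * τ + τ := by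
        exact add_le_add (add_le_add (hφ x hx) (hrep x hx).2.2) hds
    _ = (1 + 2 * ε) * τ := by ring
end

section
/- Fix a finite set U, an element a ∈ U, a subset X ⊆ U with a ∈ X, and a partial order 𝒫 on X \ {a}. Let g : U → [0,1] be random with each g(u) independent and uniform on [0,1]. Then, conditioned on the event that g is consistent with 𝒫 (meaning g(x) ≤ g(y) whenever x ≺_𝒫 y), the probability that g(a) = min_{x ∈ X} g(x) equals 1/|X|. -/
open MeasureTheory ProbabilityTheory
open scoped ENNReal

section Stmt7Aux

/-- Two coordinates of an i.i.d. continuous product measure are a.s. distinct. -/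
lemma stmt7_diag_null {U : Type*} [Fintype U] [DecidableEq U] {x y : U} (hxy : x ≠ y) :
    (Measure.pi fun _ : U => volume.restrict (Set.Icc (0:ℝ) 1)) {g : U → ℝ | g x = g y} = 0 := by
  classical
  set ν := volume.restrict (Set.Icc (0:ℝ) 1) with hν
  haveI : IsProbabilityMeasure ν := ⟨by simp [hν, Real.volume_Icc]⟩
  set p : U → Prop := fun u => u = x with hp
  have hmp := MeasureTheory.measurePreserving_piEquivPiSubtypeProd (fun _ : U => ν) p
  set e := MeasurableEquiv.piEquivPiSubtypeProd (fun _ : U => ℝ) p with he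
  have hnpy : ¬ p y := fun h => hxy h.symm
  set S2 : Set ((∀ _ : {u // p u}, ℝ) × (∀ _ : {u // ¬ p u}, ℝ)) :=
    {q | q.1 ⟨x, rfl⟩ = q.2 ⟨y, hnpy⟩} with hS2def
  have hS2 : MeasurableSet S2 :=
    measurableSet_eq_fun (measurable_fst.eval) (measurable_snd.eval)
  have hpre : e ⁻¹' S2 = {g : U → ℝ | g x = g y} := by
    ext g
    simp [he, hS2def, MeasurableEquiv.piEquivPiSubtypeProd, Equiv.piEquivPiSubtypeProd]
  rw [← hpre, hmp.measure_preimage hS2.nullMeasurableSet, Measure.prod_apply hS2]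
  have hz : ∀ s : ∀ _ : {u // p u}, ℝ,
      (Measure.pi fun _ : {u // ¬ p u} => ν) (Prod.mk s ⁻¹' S2) = 0 := by
    intro s
    have h1 : Prod.mk s ⁻¹' S2 = {t : ∀ _ : {u // ¬ p u}, ℝ | t ⟨y, hnpy⟩ = s ⟨x, rfl⟩} := by
      ext t; simp [hS2def, eq_comm]
    rw [h1]
    exact Measure.pi_hyperplane _ _ _
  simp [hz]

/-- The i.i.d. product measure is invariant under permuting coordinates. -/
lemma stmt7_perm_measure {U : Type*} [Fintype U] [DecidableEq U] (π : Equiv.Perm U)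
    {S : Set (U → ℝ)} (hS : MeasurableSet S) :
    (Measure.pi fun _ : U => volume.restrict (Set.Icc (0:ℝ) 1)) ((fun g => g ∘ π) ⁻¹' S)
      = (Measure.pi fun _ : U => volume.restrict (Set.Icc (0:ℝ) 1)) S := by
  have hmp := MeasureTheory.measurePreserving_piCongrLeft
    (fun _ : U => volume.restrict (Set.Icc (0:ℝ) 1)) π.symm
  have hco : ⇑(MeasurableEquiv.piCongrLeft (fun _ : U => ℝ) π.symm)
      = fun g : U → ℝ => g ∘ π := by
    funext g
    simp only [MeasurableEquiv.coe_piCongrLeft]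
    funext u
    simp [Equiv.piCongrLeft_apply, eq_rec_constant]
  rw [← hco]
  exact hmp.measure_preimage hS.nullMeasurableSet

/-- `Fin.cycleRange i` is strictly monotone away from `i`. -/
lemma stmt7_cycleRange_lt_iff {m : ℕ} {i j k : Fin (m+1)} (hj : j ≠ i) (hk : k ≠ i) :
    Fin.cycleRange i j < Fin.cycleRange i k ↔ j < k := by
  rcases lt_or_gt_of_ne hj with h1 | h1 <;> rcases lt_or_gt_of_ne hk with h2 | h2
  · rw [Fin.lt_def, Fin.lt_def, Fin.coe_cycleRange_of_lt h1, Fin.coe_cycleRange_of_lt h2]; omega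
  · have h1' : (j:ℕ) < i := h1
    have h2' : (i:ℕ) < k := h2
    rw [Fin.cycleRange_of_gt h2, Fin.lt_def, Fin.lt_def, Fin.coe_cycleRange_of_lt h1]; omega
  · have h1' : (i:ℕ) < j := h1
    have h2' : (k:ℕ) < i := h2
    rw [Fin.cycleRange_of_gt h1, Fin.lt_def, Fin.lt_def, Fin.coe_cycleRange_of_lt h2]; omega
  · rw [Fin.cycleRange_of_gt h1, Fin.cycleRange_of_gt h2]

/-- A strictly monotone permutation of `Fin n` is the identity. -/
lemma stmt7_strictMono_perm_eq_id {n : ℕ} (π : Fin n ≃ Fin n) (hπ : StrictMono ⇑π)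
    (i : Fin n) : π i = i := by
  haveI : WellFoundedLT (Fin n) := Finite.to_wellFoundedLT
  have h1 : i ≤ π i := hπ.le_apply
  have hπs : StrictMono ⇑π.symm := by
    intro a b hab
    rcases lt_trichotomy (π.symm a) (π.symm b) with h | h | h
    · exact h
    · exact absurd (π.symm.injective h) hab.ne
    · have := hπ h
      simp only [Equiv.apply_symm_apply] at this
      exact absurd hab (not_lt.2 this.le)
  have h2 : π i ≤ i := by simpa using hπs.le_apply (x := π i)
  exact le_antisymm h2 h1

/-- Counting: each linear order on `Y` arises in exactly `m+1` ways from a linear order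
placing `a'` first, given that the property `Q` is insensitive to the position of `a'`. -/
lemma stmt7_card_counting {Y : Type*} [DecidableEq Y] [Fintype Y] {m : ℕ} (a' : Y)
    (Q : (Fin (m+1) ≃ Y) → Prop)
    (hQ : ∀ (i : Fin (m+1)) (τ : Fin (m+1) ≃ Y), τ 0 = a' →
      (Q ((Fin.cycleRange i).trans τ) ↔ Q τ)) :
    Nat.card {σ : Fin (m+1) ≃ Y // Q σ}
      = (m+1) * Nat.card {σ : Fin (m+1) ≃ Y // Q σ ∧ σ 0 = a'} := by
  classical
  have hsymm0 : ∀ i : Fin (m+1), (Fin.cycleRange i).symm 0 = i := fun i =>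
    (Equiv.symm_apply_eq _).2 (Fin.cycleRange_self i).symm
  have hcomp : ∀ (i : Fin (m+1)) (σ : Fin (m+1) ≃ Y),
      (Fin.cycleRange i).trans ((Fin.cycleRange i).symm.trans σ) = σ := by
    intro i σ; ext j; simp
  have hcomp' : ∀ (i : Fin (m+1)) (τ : Fin (m+1) ≃ Y),
      (Fin.cycleRange i).symm.trans ((Fin.cycleRange i).trans τ) = τ := by
    intro i τ; ext j; simp
  have htau0 : ∀ σ : Fin (m+1) ≃ Y,
      ((Fin.cycleRange (σ.symm a')).symm.trans σ) 0 = a' := by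
    intro σ
    simp [Equiv.trans_apply, hsymm0]
  have hE : {σ : Fin (m+1) ≃ Y // Q σ}
      ≃ Fin (m+1) × {σ : Fin (m+1) ≃ Y // Q σ ∧ σ 0 = a'} := by
    refine ⟨fun σ => ⟨σ.1.symm a',
        ⟨(Fin.cycleRange (σ.1.symm a')).symm.trans σ.1, ?_, htau0 σ.1⟩⟩,
      fun p => ⟨(Fin.cycleRange p.1).trans p.2.1, (hQ p.1 p.2.1 p.2.2.2).2 p.2.2.1⟩, ?_, ?_⟩
    · exact (hQ (σ.1.symm a') _ (htau0 σ.1)).1 (by rw [hcomp]; exact σ.2)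
    · intro σs
      exact Subtype.ext (hcomp _ _)
    · rintro ⟨i, τ, hQτ, hτ0⟩
      have hi : ((Fin.cycleRange i).trans τ).symm a' = i := by
        calc ((Fin.cycleRange i).trans τ).symm a'
            = (Fin.cycleRange i).symm (τ.symm a') := rfl
          _ = (Fin.cycleRange i).symm 0 := by rw [(Equiv.symm_apply_eq τ).2 hτ0.symm]
          _ = i := hsymm0 i
      refine Prod.ext hi (Subtype.ext ?_)
      simp only [hi]
      exact hcomp' i τ
  rw [Nat.card_congr hE, Nat.card_prod]
  simp [Nat.card_eq_fintype_card]

end Stmt7Aux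

/-- Claim 4.13: with i.i.d. uniform labels, conditioned on consistency with a
partial order on X \ {a}, the probability that a attains the minimum over X is 1/|X|. -/
theorem stmt_7 {U : Type*} [Fintype U] [DecidableEq U]
    (X : Finset U) (a : U) (ha : a ∈ X)
    (r : U → U → Prop)
    (hdom : ∀ x y, r x y → x ∈ X.erase a ∧ y ∈ X.erase a)
    (htrans : ∀ x y z, r x y → r y z → r x z)
    (hanti : ∀ x y, r x y → r y x → x = y)
    (μ : Measure (U → ℝ))
    (hμ : μ = Measure.pi fun _ : U => volume.restrict (Set.Icc (0:ℝ) 1))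
    (hpos : 0 < μ {g | ∀ x y, r x y → g x ≤ g y}) :
    (μ[|{g | ∀ x y, r x y → g x ≤ g y}]) {g | ∀ x ∈ X, g a ≤ g x}
      = (X.card : ℝ≥0∞)⁻¹ := by
  classical
  haveI : IsProbabilityMeasure (volume.restrict (Set.Icc (0:ℝ) 1)) :=
    ⟨by simp [Real.volume_Icc]⟩
  haveI : IsProbabilityMeasure μ := by rw [hμ]; infer_instance
  obtain ⟨m, hm⟩ : ∃ m, X.card = m + 1 :=
    ⟨X.card - 1, by have : 0 < X.card := Finset.card_pos.2 ⟨a, ha⟩; omega⟩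
  set Y := {x // x ∈ X} with hY
  set a' : Y := ⟨a, ha⟩ with ha'
  set C := {g : U → ℝ | ∀ x y, r x y → g x ≤ g y} with hCdef
  set A := {g : U → ℝ | ∀ x ∈ X, g a ≤ g x} with hAdef
  have hC : MeasurableSet C := by
    have : C = ⋂ (x : U), ⋂ (y : U), ⋂ (_ : r x y), {g : U → ℝ | g x ≤ g y} := by
      ext g; simp [hCdef]
    rw [this]
    exact MeasurableSet.iInter fun x => MeasurableSet.iInter fun y =>
      MeasurableSet.iInter fun _ =>
        measurableSet_le (measurable_pi_apply x) (measurable_pi_apply y)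
  have hA : MeasurableSet A := by
    have : A = ⋂ (x : U), ⋂ (_ : x ∈ X), {g : U → ℝ | g a ≤ g x} := by
      ext g; simp [hAdef]
    rw [this]
    exact MeasurableSet.iInter fun x => MeasurableSet.iInter fun _ =>
      measurableSet_le (measurable_pi_apply a) (measurable_pi_apply x)
  -- the ordered regions
  set R : (Fin (m+1) ≃ Y) → Set (U → ℝ) :=
    fun σ => {g | ∀ i j : Fin (m+1), i < j → g ↑(σ i) < g ↑(σ j)} with hRdef
  have hRmeas : ∀ σ, MeasurableSet (R σ) := by
    intro σ
    have : R σ = ⋂ (i : Fin (m+1)), ⋂ (j : Fin (m+1)), ⋂ (_ : i < j),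
        {g : U → ℝ | g ↑(σ i) < g ↑(σ j)} := by
      ext g; simp [hRdef]
    rw [this]
    exact MeasurableSet.iInter fun i => MeasurableSet.iInter fun j =>
      MeasurableSet.iInter fun _ =>
        measurableSet_lt (measurable_pi_apply _) (measurable_pi_apply _)
  -- disjointness of the regions
  have hRdisj : ∀ σ τ : Fin (m+1) ≃ Y, σ ≠ τ → Disjoint (R σ) (R τ) := by
    intro σ τ hst
    rw [Set.disjoint_left]
    intro g hgσ hgτ
    have hfσ : StrictMono fun i => g ↑(σ i) := fun i j h => hgσ i j h
    have hfτ : StrictMono fun i => g ↑(τ i) := fun i j h => hgτ i j h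
    set π : Fin (m+1) ≃ Fin (m+1) := τ.trans σ.symm with hπdef
    have hπσ : ∀ i, σ (π i) = τ i := by intro i; simp [hπdef]
    have hπ : StrictMono ⇑π := by
      intro i j hij
      have h1 : g ↑(σ (π i)) < g ↑(σ (π j)) := by
        rw [hπσ i, hπσ j]; exact hfτ hij
      exact hfσ.lt_iff_lt.mp h1
    apply hst
    apply Equiv.ext
    intro i
    rw [← hπσ i, stmt7_strictMono_perm_eq_id π hπ i]
  -- all regions have the same measure
  have hRsym : ∀ σ τ : Fin (m+1) ≃ Y, μ (R σ) = μ (R τ) := by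
    intro σ τ
    set e : Equiv.Perm Y := σ.symm.trans τ with hedef
    set π : Equiv.Perm U := e.extendDomain (Equiv.refl Y) with hπdef
    have hπ : ∀ z : Y, π ↑z = ↑(e z) := by
      intro z
      simpa [hπdef] using e.extendDomain_apply_image (Equiv.refl Y) z
    have hπσ : ∀ i, π ↑(σ i) = ↑(τ i) := by
      intro i
      rw [hπ (σ i)]
      congr 1
      simp [hedef]
    have hpre : R τ = (fun g : U → ℝ => g ∘ π) ⁻¹' (R σ) := by
      ext g
      constructor
      · intro h i j hij
        show g (π ↑(σ i)) < g (π ↑(σ j))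
        rw [hπσ i, hπσ j]
        exact h i j hij
      · intro h i j hij
        have h2 : g (π ↑(σ i)) < g (π ↑(σ j)) := h i j hij
        rwa [hπσ i, hπσ j] at h2
    rw [hpre, hμ]
    exact (stmt7_perm_measure π (hRmeas σ)).symm
  -- a.e. some region occurs
  set e0 : Fin (m+1) ≃ Y := (X.equivFin.trans (finCongr hm)).symm with he0
  have hcover : ∀ g : U → ℝ, (∀ p q : Y, g ↑p = g ↑q → p = q) → ∃ σ, g ∈ R σ := by
    intro g hg
    set f : Fin (m+1) → ℝ := fun i => g ↑(e0 i) with hf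
    have hfinj : Function.Injective f := fun i j h => e0.injective (hg _ _ h)
    have hms : StrictMono (f ∘ ⇑(Tuple.sort f)) :=
      (Tuple.monotone_sort f).strictMono_of_injective (hfinj.comp (Tuple.sort f).injective)
    exact ⟨(Tuple.sort f).trans e0, fun i j hij => hms hij⟩
  have hTnull : μ (⋃ σ : Fin (m+1) ≃ Y, R σ)ᶜ = 0 := by
    have hsub : (⋃ σ : Fin (m+1) ≃ Y, R σ)ᶜ
        ⊆ ⋃ (p : Y) (q : Y) (_ : p ≠ q), {g : U → ℝ | g ↑p = g ↑q} := by
      intro g hg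
      rw [Set.mem_compl_iff] at hg
      by_contra hcon
      simp only [Set.mem_iUnion, not_exists, Set.mem_setOf_eq] at hcon
      refine hg (Set.mem_iUnion.2 (hcover g fun p q h => ?_))
      by_contra hne
      exact hcon p q hne h
    refine measure_mono_null hsub ?_
    refine measure_iUnion_null fun p => measure_iUnion_null fun q =>
      measure_iUnion_null fun hpq => ?_
    have hne : (↑p : U) ≠ ↑q := fun h => hpq (Subtype.ext h)
    rw [hμ]
    exact stmt7_diag_null hne
  -- decomposition of measures along regions
  have hdecomp : ∀ D : Set (U → ℝ), MeasurableSet D →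
      μ D = ∑ σ : Fin (m+1) ≃ Y, μ (D ∩ R σ) := by
    intro D hD
    have hT : MeasurableSet (⋃ σ : Fin (m+1) ≃ Y, R σ) :=
      MeasurableSet.iUnion fun σ => hRmeas σ
    have h2 : μ (D \ ⋃ σ : Fin (m+1) ≃ Y, R σ) = 0 :=
      measure_mono_null (fun g hgm => hgm.2) hTnull
    have hpd : Pairwise (Function.onFun Disjoint fun σ : Fin (m+1) ≃ Y => D ∩ R σ) :=
      fun σ τ h => (hRdisj σ τ h).mono Set.inter_subset_right Set.inter_subset_right
    calc μ D = μ (D ∩ ⋃ σ : Fin (m+1) ≃ Y, R σ) + μ (D \ ⋃ σ : Fin (m+1) ≃ Y, R σ) :=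
          (measure_inter_add_diff D hT).symm
      _ = μ (⋃ σ : Fin (m+1) ≃ Y, D ∩ R σ) := by rw [h2, add_zero, Set.inter_iUnion]
      _ = ∑' σ : Fin (m+1) ≃ Y, μ (D ∩ R σ) :=
          measure_iUnion hpd fun σ => hD.inter (hRmeas σ)
      _ = ∑ σ : Fin (m+1) ≃ Y, μ (D ∩ R σ) := tsum_fintype _
  set c := μ (R e0) with hcdef
  -- extension property
  set Ext : (Fin (m+1) ≃ Y) → Prop :=
    fun σ => ∀ i j : Fin (m+1), r ↑(σ i) ↑(σ j) → i ≤ j with hExtDef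
  have hRC : ∀ σ, Ext σ → R σ ⊆ C := by
    intro σ hσ g hg x y hr
    have hx : x ∈ X := Finset.mem_of_mem_erase (hdom x y hr).1
    have hy : y ∈ X := Finset.mem_of_mem_erase (hdom x y hr).2
    set i := σ.symm ⟨x, hx⟩ with hi
    set j := σ.symm ⟨y, hy⟩ with hj
    have hxi : (↑(σ i) : U) = x := by rw [hi]; simp
    have hyj : (↑(σ j) : U) = y := by rw [hj]; simp
    have hij : i ≤ j := hσ i j (by rw [hxi, hyj]; exact hr)
    rcases eq_or_lt_of_le hij with h | h
    · have hxy : x = y := by rw [← hxi, ← hyj, h]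
      rw [hxy]
    · have := hg i j h
      rw [hxi, hyj] at this
      exact this.le
  have hCempty : ∀ σ, ¬ Ext σ → C ∩ R σ = ∅ := by
    intro σ h
    rw [Set.eq_empty_iff_forall_notMem]
    rintro g ⟨hgC, hgR⟩
    simp only [hExtDef, not_forall] at h
    obtain ⟨i, j, hr, hij⟩ := h
    exact absurd (hgC _ _ hr) (not_le.2 (hgR j i (not_le.1 hij)))
  have hCRval : ∀ σ, μ (C ∩ R σ) = if Ext σ then c else 0 := by
    intro σ
    by_cases h : Ext σ
    · rw [if_pos h, Set.inter_eq_self_of_subset_right (hRC σ h)]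
      exact hRsym σ e0
    · rw [if_neg h, hCempty σ h, measure_empty]
  have hCARval : ∀ σ, μ ((C ∩ A) ∩ R σ) = if Ext σ ∧ σ 0 = a' then c else 0 := by
    intro σ
    by_cases h : Ext σ ∧ σ 0 = a'
    · obtain ⟨hE, h0'⟩ := h
      have h0 : (↑(σ 0) : U) = a := by rw [h0']
      rw [if_pos ⟨hE, h0'⟩]
      have hRA : R σ ⊆ A := by
        intro g hg x hx
        set i := σ.symm ⟨x, hx⟩ with hi
        have hxi : (↑(σ i) : U) = x := by rw [hi]; simp
        rcases eq_or_ne i 0 with h' | h'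
        · have : x = a := by rw [← hxi, h', h0]
          rw [this]
        · have hpos0 : (0 : Fin (m+1)) < i := Fin.pos_of_ne_zero h'
          have := hg 0 i hpos0
          rw [hxi, h0] at this
          exact this.le
      rw [Set.inter_eq_self_of_subset_right
        (Set.subset_inter (hRC σ hE) hRA)]
      exact hRsym σ e0
    · rw [if_neg h]
      rcases Classical.em (Ext σ) with hE | hE
      · have h0 : (↑(σ 0) : U) ≠ a := fun hc => h ⟨hE, Subtype.ext hc⟩
        have : (C ∩ A) ∩ R σ = ∅ := by
          rw [Set.eq_empty_iff_forall_notMem]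
          rintro g ⟨⟨hgC, hgA⟩, hgR⟩
          have hle : g a ≤ g ↑(σ 0) := hgA ↑(σ 0) (σ 0).2
          set i := σ.symm a' with hi
          have hia : (↑(σ i) : U) = a := by rw [hi]; simp [ha']
          have h' : i ≠ 0 := fun hc => h0 (by rw [← hia, hc])
          have hpos0 : (0 : Fin (m+1)) < i := Fin.pos_of_ne_zero h'
          have hlt := hgR 0 i hpos0
          rw [hia] at hlt
          exact absurd hle (not_le.2 hlt)
        rw [this, measure_empty]
      · have : (C ∩ A) ∩ R σ = ∅ := by
          have hsub : (C ∩ A) ∩ R σ ⊆ C ∩ R σ :=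
            Set.inter_subset_inter_left _ Set.inter_subset_left
          rw [Set.eq_empty_iff_forall_notMem]
          intro g hgm
          rw [hCempty σ hE] at hsub
          exact hsub hgm
        rw [this, measure_empty]
  -- sum up
  have hsum1 : μ C = ((Finset.univ.filter Ext).card : ℝ≥0∞) * c := by
    rw [hdecomp C hC]
    rw [Finset.sum_congr rfl fun σ _ => hCRval σ, ← Finset.sum_filter,
      Finset.sum_const, nsmul_eq_mul]
  have hsum2 : μ (C ∩ A)
      = ((Finset.univ.filter fun σ : Fin (m+1) ≃ Y => Ext σ ∧ σ 0 = a').card : ℝ≥0∞) * c := by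
    rw [hdecomp (C ∩ A) (hC.inter hA)]
    rw [Finset.sum_congr rfl fun σ _ => hCARval σ, ← Finset.sum_filter,
      Finset.sum_const, nsmul_eq_mul]
  -- counting linear extensions
  have hQ : ∀ (i : Fin (m+1)) (τ : Fin (m+1) ≃ Y), τ 0 = a' →
      (Ext ((Fin.cycleRange i).trans τ) ↔ Ext τ) := by
    intro i τ hτ0
    have hcrinj := (Fin.cycleRange i).injective
    constructor
    · intro hσ j k hr
      have hj0 : j ≠ 0 := by
        rintro rfl
        have hmem := (hdom _ _ hr).1
        rw [hτ0] at hmem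
        exact Finset.notMem_erase a X hmem
      have hk0 : k ≠ 0 := by
        rintro rfl
        have hmem := (hdom _ _ hr).2
        rw [hτ0] at hmem
        exact Finset.notMem_erase a X hmem
      set j' := (Fin.cycleRange i).symm j with hj'
      set k' := (Fin.cycleRange i).symm k with hk'
      have hcrj : Fin.cycleRange i j' = j := Equiv.apply_symm_apply _ _
      have hcrk : Fin.cycleRange i k' = k := Equiv.apply_symm_apply _ _
      have hj'i : j' ≠ i := fun h => hj0 (by rw [← hcrj, h, Fin.cycleRange_self])
      have hk'i : k' ≠ i := fun h => hk0 (by rw [← hcrk, h, Fin.cycleRange_self])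
      have hr' : r ↑(((Fin.cycleRange i).trans τ) j') ↑(((Fin.cycleRange i).trans τ) k') := by
        have : ((Fin.cycleRange i).trans τ) j' = τ j := by
          simp only [Equiv.trans_apply, hcrj]
        have h2 : ((Fin.cycleRange i).trans τ) k' = τ k := by
          simp only [Equiv.trans_apply, hcrk]
        rw [this, h2]
        exact hr
      have hle := hσ j' k' hr'
      rcases eq_or_lt_of_le hle with h | h
      · rw [← hcrj, ← hcrk, h]
      · have := (stmt7_cycleRange_lt_iff hj'i hk'i).2 h
        rw [hcrj, hcrk] at this
        exact this.le
    · intro hτ j k hr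
      have hji : j ≠ i := by
        intro h
        have h1 : ((Fin.cycleRange i).trans τ) j = a' := by
          rw [h]; simp only [Equiv.trans_apply, Fin.cycleRange_self]; exact hτ0
        have hmem := (hdom _ _ hr).1
        rw [h1] at hmem
        exact Finset.notMem_erase a X hmem
      have hki : k ≠ i := by
        intro h
        have h1 : ((Fin.cycleRange i).trans τ) k = a' := by
          rw [h]; simp only [Equiv.trans_apply, Fin.cycleRange_self]; exact hτ0
        have hmem := (hdom _ _ hr).2
        rw [h1] at hmem
        exact Finset.notMem_erase a X hmem
      have hle := hτ (Fin.cycleRange i j) (Fin.cycleRange i k) hr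
      rcases eq_or_lt_of_le hle with h | h
      · exact le_of_eq (hcrinj h)
      · exact ((stmt7_cycleRange_lt_iff hji hki).1 h).le
  have hQ' : ∀ (i : Fin (m+1)) (τ : Fin (m+1) ≃ Y), τ 0 = a' →
      ((fun σ : Fin (m+1) ≃ Y => Ext σ) ((Fin.cycleRange i).trans τ)
        ↔ (fun σ : Fin (m+1) ≃ Y => Ext σ) τ) := hQ
  have hcard : (Finset.univ.filter Ext).card
      = (m+1) * (Finset.univ.filter fun σ : Fin (m+1) ≃ Y => Ext σ ∧ σ 0 = a').card := by
    have h1 : (Finset.univ.filter Ext).card = Nat.card {σ : Fin (m+1) ≃ Y // Ext σ} := by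
      rw [Nat.card_eq_fintype_card, Fintype.card_subtype]
    have h2 : (Finset.univ.filter fun σ : Fin (m+1) ≃ Y => Ext σ ∧ σ 0 = a').card
        = Nat.card {σ : Fin (m+1) ≃ Y // Ext σ ∧ σ 0 = a'} := by
      rw [Nat.card_eq_fintype_card, Fintype.card_subtype]
    rw [h1, h2]
    exact stmt7_card_counting a' Ext hQ
  -- final computation
  rw [ProbabilityTheory.cond_apply hC]
  have hcne : c ≠ 0 := by
    intro h0
    rw [hsum1, h0, mul_zero] at hpos
    exact lt_irrefl _ hpos
  have hctop : c ≠ ⊤ := measure_ne_top μ _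
  set N₀ := (Finset.univ.filter fun σ : Fin (m+1) ≃ Y => Ext σ ∧ σ 0 = a').card with hN₀
  have hN₀ne : N₀ ≠ 0 := by
    intro h0
    rw [hsum1, hcard, h0, Nat.mul_zero, Nat.cast_zero, zero_mul] at hpos
    exact lt_irrefl _ hpos
  have hd0 : ((N₀ : ℝ≥0∞) * c) ≠ 0 := mul_ne_zero (Nat.cast_ne_zero.2 hN₀ne) hcne
  have hdT : ((N₀ : ℝ≥0∞) * c) ≠ ⊤ := ENNReal.mul_ne_top (ENNReal.natCast_ne_top _) hctop
  have h1 : (((m+1 : ℕ) : ℝ≥0∞)) ≠ 0 := Nat.cast_ne_zero.2 (Nat.succ_ne_zero m)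
  have h2 : (((m+1 : ℕ) : ℝ≥0∞)) ≠ ⊤ := ENNReal.natCast_ne_top _
  rw [hsum1, hsum2, hcard, hm, Nat.cast_mul, mul_assoc,
    ENNReal.mul_inv (Or.inl h1) (Or.inl h2), mul_assoc,
    ENNReal.inv_mul_cancel hd0 hdT, mul_one]
end

section
/- Let π = (π_1, …, π_{t−1}) be a sequence of positive integers. Then Π_{i=1}^{t−1} Σ_{j=1}^{i} 2^{π_j} ≥ Π_{v} (2^{v·w_v} · w_v!), where for each positive integer v, w_v := |{ i ∈ [t−1] : π_i = v }|. -/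
lemma rank_prod_aux9 {α : Type*} [LinearOrder α] [DecidableEq α] (s : Finset α) :
    ∏ i ∈ s, (s.filter (· ≤ i)).card = s.card.factorial := by
  induction s using Finset.strongInduction with
  | _ s ih =>
    rcases s.eq_empty_or_nonempty with rfl | hs
    · simp
    · have hm : s.max' hs ∈ s := s.max'_mem hs
      rw [← Finset.insert_erase hm, Finset.prod_insert (Finset.notMem_erase _ _)]
      have h1 : ((insert (s.max' hs) (s.erase (s.max' hs))).filter (· ≤ s.max' hs)).card
          = s.card := by
        rw [Finset.insert_erase hm, Finset.filter_true_of_mem (fun x hx => s.le_max' x hx)]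
      have h2 : ∀ i ∈ s.erase (s.max' hs),
          ((insert (s.max' hs) (s.erase (s.max' hs))).filter (· ≤ i)).card
          = ((s.erase (s.max' hs)).filter (· ≤ i)).card := by
        intro i hi
        congr 1
        rw [Finset.filter_insert, if_neg]
        intro h
        have hlt : i < s.max' hs := lt_of_le_of_ne (s.le_max' i (Finset.mem_of_mem_erase hi))
          (Finset.ne_of_mem_erase hi)
        exact absurd h (not_le.mpr hlt)
      rw [h1, Finset.prod_congr rfl h2, ih _ (Finset.erase_ssubset hm),
        Finset.card_erase_of_mem hm, Finset.insert_erase hm]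
      have hpos : 0 < s.card := Finset.card_pos.mpr hs
      rw [← Nat.succ_pred_eq_of_pos hpos, Nat.factorial_succ, Nat.succ_sub_one]

/-- Π_{i=1}^{t−1} Σ_{j ≤ i} 2^{π_j} ≥ Π_v 2^{v·w_v}·w_v!, where w_v counts the
occurrences of the value v in π. -/
theorem stmt_9 (n : ℕ) (π : Fin n → ℕ) (hπ : ∀ i, 1 ≤ π i) :
    (∏ v ∈ Finset.univ.image π,
        2 ^ (v * (Finset.univ.filter (fun i => π i = v)).card)
          * Nat.factorial (Finset.univ.filter (fun i => π i = v)).card)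
      ≤ ∏ i : Fin n, ∑ j ∈ Finset.univ.filter (fun j => j ≤ i), 2 ^ (π j) := by
  -- pointwise bound
  have key : ∀ i : Fin n,
      ((Finset.univ.filter (fun j => π j = π i)).filter (· ≤ i)).card * 2 ^ (π i)
        ≤ ∑ j ∈ Finset.univ.filter (fun j => j ≤ i), 2 ^ (π j) := by
    intro i
    have hsub : (Finset.univ.filter (fun j => π j = π i)).filter (· ≤ i)
        ⊆ Finset.univ.filter (fun j => j ≤ i) := by
      intro j hj
      simp only [Finset.mem_filter] at *
      exact ⟨Finset.mem_univ _, hj.2⟩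
    calc ((Finset.univ.filter (fun j => π j = π i)).filter (· ≤ i)).card * 2 ^ (π i)
        = ∑ j ∈ (Finset.univ.filter (fun j => π j = π i)).filter (· ≤ i), 2 ^ (π j) := by
          rw [Finset.sum_congr rfl (fun j hj => by
            simp only [Finset.mem_filter] at hj
            rw [hj.1.2]), Finset.sum_const, smul_eq_mul]
      _ ≤ _ := Finset.sum_le_sum_of_subset hsub
  refine le_trans ?_ (Finset.prod_le_prod' (fun i _ => key i))
  -- regroup by fibers
  rw [← Finset.prod_fiberwise_of_maps_to (g := π)
      (fun i _ => Finset.mem_image_of_mem π (Finset.mem_univ i))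
      (fun i => ((Finset.univ.filter (fun j => π j = π i)).filter (· ≤ i)).card * 2 ^ (π i))]
  apply le_of_eq
  apply Finset.prod_congr rfl
  intro v hv
  have : ∀ i ∈ Finset.univ.filter (fun i => π i = v),
      ((Finset.univ.filter (fun j => π j = π i)).filter (· ≤ i)).card * 2 ^ (π i)
      = ((Finset.univ.filter (fun j => π j = v)).filter (· ≤ i)).card * 2 ^ v := by
    intro i hi
    simp only [Finset.mem_filter] at hi
    rw [hi.2]
  rw [Finset.prod_congr rfl this, Finset.prod_mul_distrib, Finset.prod_const,
    rank_prod_aux9, ← pow_mul, mul_comm v _]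
  ring
end

section
/- Let P' ⊆ ℝ be a finite set of n ≥ k+1 distinct reals, k ≥ 2. Sort P' and let r_k be the k-th largest gap between consecutive points. Then the optimal k-center cost of P' (using at most k centers in ℝ) is at least r_k / 2. -/
/-- 1D k-center lower bound: if at least k consecutive gaps are ≥ r (so r ≤ r_k,
the k-th largest gap), then any center set of size ≤ k has cost ≥ r/2. -/
theorem stmt_11 (k m : ℕ) (hk : 2 ≤ k) (hkm : k + 1 ≤ m + 1)
    (P' : Finset ℝ) (x : Fin (m + 1) → ℝ) (hmono : StrictMono x)
    (himg : P' = Finset.univ.image x)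
    (r : ℝ)
    (hgaps : k ≤ (Finset.univ.filter (fun i : Fin m => r ≤ x i.succ - x i.castSucc)).card) :
    ∀ C : Finset ℝ, C.card ≤ k → ∃ p ∈ P', ∀ c ∈ C, r / 2 ≤ |p - c| := by
  classical
  intro C hC
  rcases le_or_gt r 0 with hr | hr
  · refine ⟨x 0, ?_, fun c _ => ?_⟩
    · rw [himg]; exact Finset.mem_image_of_mem x (Finset.mem_univ _)
    · have : r / 2 ≤ 0 := by linarith
      exact this.trans (abs_nonneg _)
  · by_contra hcon
    push_neg at hcon
    choose! f hfC hfd using hcon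
    obtain ⟨T, hTsub, hTcard⟩ := Finset.exists_subset_card_eq hgaps
    have hTg : ∀ i ∈ T, r ≤ x i.succ - x i.castSucc := by
      intro i hi
      have := hTsub hi
      simp only [Finset.mem_filter] at this
      exact this.2
    set S : Finset ℝ := insert (x 0) (T.image (fun i => x i.succ)) with hS
    have hnot : x 0 ∉ T.image (fun i => x i.succ) := by
      simp only [Finset.mem_image, not_exists]
      rintro i ⟨hi, heq⟩
      exact Fin.succ_ne_zero i (hmono.injective heq)
    have hinj : Set.InjOn (fun i : Fin m => x i.succ) T := by
      intro i _ j _ hij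
      exact Fin.succ_injective _ (hmono.injective hij)
    have hScard : S.card = k + 1 := by
      rw [hS, Finset.card_insert_of_notMem hnot, Finset.card_image_of_injOn hinj, hTcard]
    have hSsub : ∀ a ∈ S, a ∈ P' := by
      intro a ha
      rw [himg]
      rw [hS, Finset.mem_insert] at ha
      rcases ha with rfl | ha
      · exact Finset.mem_image_of_mem x (Finset.mem_univ _)
      · obtain ⟨i, _, rfl⟩ := Finset.mem_image.mp ha
        exact Finset.mem_image_of_mem x (Finset.mem_univ _)
    -- separation
    have hzero : ∀ i ∈ T, r ≤ x i.succ - x 0 := by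
      intro i hi
      have h1 : x 0 ≤ x i.castSucc := hmono.monotone (Fin.zero_le _)
      have := hTg i hi
      linarith
    have hpair : ∀ i ∈ T, ∀ j ∈ T, (i : ℕ) < (j : ℕ) → r ≤ x j.succ - x i.succ := by
      intro i hi j hj hij
      have h1 : x i.succ ≤ x j.castSucc := by
        apply hmono.monotone
        simp [Fin.le_def, Fin.val_succ]
        omega
      have := hTg j hj
      linarith
    have hsep : ∀ a ∈ S, ∀ b ∈ S, a ≠ b → r ≤ |a - b| := by
      intro a ha b hb hab
      rw [hS, Finset.mem_insert] at ha hb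
      rcases ha with rfl | ha <;> rcases hb with rfl | hb
      · exact absurd rfl hab
      · obtain ⟨i, hi, rfl⟩ := Finset.mem_image.mp hb
        have := hzero i hi
        rw [abs_sub_comm, abs_of_nonneg (by linarith)]
        linarith
      · obtain ⟨i, hi, rfl⟩ := Finset.mem_image.mp ha
        have := hzero i hi
        rw [abs_of_nonneg (by linarith)]
        linarith
      · obtain ⟨i, hi, rfl⟩ := Finset.mem_image.mp ha
        obtain ⟨j, hj, rfl⟩ := Finset.mem_image.mp hb
        have hij : (i : ℕ) ≠ (j : ℕ) := by
          intro h
          exact hab (congrArg x (congrArg Fin.succ (Fin.ext h)))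
        rcases hij.lt_or_gt with h | h
        · have := hpair i hi j hj h
          rw [abs_sub_comm, abs_of_nonneg (by linarith)]
          linarith
        · have := hpair j hj i hi h
          rw [abs_of_nonneg (by linarith)]
          linarith
    -- pigeonhole
    have hlt : C.card < S.card := by rw [hScard]; omega
    have hmaps : ∀ a ∈ S, f a ∈ C := fun a ha => hfC a (hSsub a ha)
    obtain ⟨a, ha, b, hb, hab, hfab⟩ :=
      Finset.exists_ne_map_eq_of_card_lt_of_maps_to hlt hmaps
    have h1 := hfd a (hSsub a ha)
    have h2 := hfd b (hSsub b hb)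
    have h3 := hsep a ha b hb hab
    have h4 : |a - b| ≤ |a - f a| + |f a - b| := abs_sub_le _ _ _
    rw [hfab] at h4 h1
    have h5 : |f b - b| = |b - f b| := abs_sub_comm _ _
    linarith
end
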